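/- arXiv:2304.08145 — 2 statements merged into one kernel-verified Lean document; each statement's English description precedes it below -/
import Mathlib

section
/- Let P be a locally geometric poset and let a be an atom of P. Then rk(P) − rk(P') equals either 0 or 1, where P' = P(A(P)∖{a}) is the subposet of P generated by the atoms other than a. -/
open scoped Classical
open Polynomial

noncomputable section

namespace PosetArr

/-- The rank of an element of a poset: the length of the longest chain
strictly below it. In a ranked poset this is the common length of all maximal
chains with greatest element `x`. -/
noncomputable def rk {α : Type*} [Preorder α] (x : α) : ℕ :=
  (Set.chainHeight (Set.Iio x) (· < ·)).toNat

/-- The rank of a (finite) poset: the maximal rank of an element. -/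
noncomputable def prk (α : Type*) [Preorder α] [Fintype α] : ℕ :=
  Finset.univ.sup (rk (α := α))

/-- A finite poset is ranked iff covering relations increase `rk` by one;
equivalently, for every `x` all maximal chains with greatest element `x`
have the same length. -/
def IsRanked (α : Type*) [Preorder α] : Prop :=
  ∀ x y : α, x ⋖ y → rk y = rk x + 1

/-- The set of atoms (elements of rank 1) of a poset. -/
def atoms (α : Type*) [Preorder α] : Set α := {x : α | rk x = 1}

/-- `joinSet T` is the join `⋁ T`: the set of minimal upper bounds of `T`. -/
def joinSet {α : Type*} [PartialOrder α] (T : Set α) : Set α :=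
  {z | z ∈ upperBounds T ∧ ∀ w ∈ upperBounds T, w ≤ z → w = z}

/-- `meetSet T` is the meet `⋀ T`: the set of maximal lower bounds of `T`. -/
def meetSet {α : Type*} [PartialOrder α] (T : Set α) : Set α :=
  {z | z ∈ lowerBounds T ∧ ∀ w ∈ lowerBounds T, z ≤ w → w = z}

/-- A poset is a lattice if any two elements have a unique minimal upper
bound and a unique maximal lower bound. -/
def IsLatticePoset (α : Type*) [PartialOrder α] : Prop :=
  ∀ x y : α, (∃! z, z ∈ joinSet {x, y}) ∧ (∃! z, z ∈ meetSet {x, y})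

/-- A (finite) lattice is geometric if for all `x, y`: `y` covers `x` iff
there is an atom `a` with `a ≰ x` and `y = x ∨ a`. -/
def IsGeomLattice (α : Type*) [PartialOrder α] : Prop :=
  IsLatticePoset α ∧
    ∀ x y : α, x ⋖ y ↔ ∃ a : α, a ∈ atoms α ∧ ¬a ≤ x ∧ y ∈ joinSet {x, a}

/-- A finite ranked poset is locally geometric if every lower interval
`P_{≤ x}` is a geometric lattice. -/
def IsLocallyGeometric (α : Type*) [PartialOrder α] : Prop :=
  IsRanked α ∧ ∀ x : α, IsGeomLattice {y : α // y ≤ x}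

/-- The Möbius function of a finite poset. -/
noncomputable def mob {α : Type*} [PartialOrder α] [Fintype α] (a b : α) : ℤ :=
  if a = b then 1
  else if a < b then
    - ∑ c ∈ (Finset.univ.filter (fun c : α => a ≤ c ∧ c < b)).attach, mob a c.1
  else 0
termination_by (Finset.univ.filter (fun c : α => c ≤ b)).card
decreasing_by
  have hc := c.2
  simp only [Finset.mem_filter, Finset.mem_univ, true_and] at hc
  apply Finset.card_lt_card
  constructor
  · intro z hz
    simp only [Finset.mem_filter, Finset.mem_univ, true_and] at hz ⊢
    exact hz.trans hc.2.le
  · intro hsub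
    have hb : b ∈ Finset.univ.filter (fun z : α => z ≤ b) := by
      simp
    have := hsub hb
    simp only [Finset.mem_filter, Finset.mem_univ, true_and] at this
    exact absurd (lt_of_le_of_lt this hc.2) (lt_irrefl _)

/-- The characteristic polynomial of a finite ranked poset with `0̂`:
`χ_P(t) = ∑_x μ(0̂,x) t^(rk(P) - rk(x))`. -/
noncomputable def charPoly (α : Type*) [PartialOrder α] [Fintype α] [OrderBot α] :
    Polynomial ℤ :=
  ∑ x : α, Polynomial.C (mob ⊥ x) * Polynomial.X ^ (prk α - rk x)

/-- The subposet of `P` generated by a set `B` of atoms: the minimal element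
together with all joins of subsets of `B`. -/
def genSub {α : Type*} [PartialOrder α] [OrderBot α] (B : Set α) : Set α :=
  insert ⊥ {z | ∃ T ⊆ B, z ∈ joinSet T}

instance upperOrderBot {α : Type*} [PartialOrder α] (a : α) :
    OrderBot {y : α // a ≤ y} where
  bot := ⟨a, le_rfl⟩
  bot_le y := y.2

instance genSubOrderBot {α : Type*} [PartialOrder α] [OrderBot α] (B : Set α) :
    OrderBot {y : α // y ∈ genSub B} where
  bot := ⟨⊥, Set.mem_insert _ _⟩
  bot_le y := bot_le

/-- `OrderBot` structure on a down-set containing `⊥`. -/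
def subsetOrderBot {α : Type*} [PartialOrder α] [OrderBot α] {Q : Set α}
    (h : ⊥ ∈ Q) : OrderBot {y : α // y ∈ Q} where
  bot := ⟨⊥, h⟩
  bot_le y := bot_le

/-- The class of inductive posets: the smallest class of locally geometric
posets containing the one-element poset and closed under the addition step:
`P ∈ IP` whenever there is an atom `a` such that `P'' = P_{≥a} ∈ IP`,
`P' = P(A(P) \ {a}) ∈ IP` and `χ_{P''} ∣ χ_{P'}`. -/
inductive IsInductivePoset :
    ∀ (β : Type) (po : PartialOrder β) (fin : Fintype β) (bo : OrderBot β), Prop where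
  | triv (β : Type) [po : PartialOrder β] [fin : Fintype β] [bo : OrderBot β]
      (h : ∀ x : β, x = ⊥) : IsInductivePoset β po fin bo
  | step (β : Type) [po : PartialOrder β] [fin : Fintype β] [bo : OrderBot β]
      (hLG : IsLocallyGeometric β) (a : β) (ha : a ∈ atoms β)
      (hres : IsInductivePoset {y : β // a ≤ y} inferInstance inferInstance inferInstance)
      (hdel : IsInductivePoset {y : β // y ∈ genSub (atoms β \ {a})}
        inferInstance inferInstance inferInstance)
      (hdvd : charPoly {y : β // a ≤ y} ∣ charPoly {y : β // y ∈ genSub (atoms β \ {a})}) :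
      IsInductivePoset β po fin bo

/-- The class of divisional posets: the smallest class of locally geometric
posets containing the one-element poset and closed under:
`P ∈ DP` whenever there is an atom `a` such that `P'' = P_{≥a} ∈ DP`
and `χ_{P''} ∣ χ_P`. -/
inductive IsDivisionalPoset :
    ∀ (β : Type) (po : PartialOrder β) (fin : Fintype β) (bo : OrderBot β), Prop where
  | triv (β : Type) [po : PartialOrder β] [fin : Fintype β] [bo : OrderBot β]
      (h : ∀ x : β, x = ⊥) : IsDivisionalPoset β po fin bo
  | step (β : Type) [po : PartialOrder β] [fin : Fintype β] [bo : OrderBot β]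
      (hLG : IsLocallyGeometric β) (a : β) (ha : a ∈ atoms β)
      (hres : IsDivisionalPoset {y : β // a ≤ y} inferInstance inferInstance inferInstance)
      (hdvd : charPoly {y : β // a ≤ y} ∣ charPoly β) :
      IsDivisionalPoset β po fin bo

/-- An element `m` of a (geometric) lattice is modular if
`m ∧ (y ∨ z) = (m ∧ y) ∨ z` for all `z ≤ m` and all `y`. Joins and meets are
expressed via `joinSet` and `meetSet`. -/
def IsModular {β : Type*} [PartialOrder β] (m : β) : Prop :=
  ∀ z y j mj my r : β, z ≤ m →
    j ∈ joinSet {y, z} → mj ∈ meetSet {m, j} →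
    my ∈ meetSet {m, y} → r ∈ joinSet {my, z} → mj = r

/-- `Q` is an M-ideal of the locally geometric poset `β`. -/
def IsMIdeal (β : Type*) [PartialOrder β] (Q : Set β) : Prop :=
  IsLowerSet Q ∧
  (∀ x y : β, Maximal (· ∈ Q) x → Maximal (· ∈ Q) y → rk x = rk y) ∧
  (∀ T ⊆ Q, joinSet T ⊆ Q) ∧
  (∀ y ∈ Q, ∀ a ∈ atoms β, a ∉ Q → (joinSet {a, y}).Nonempty) ∧
  (∀ x : β, IsMax x → ∃ y, Maximal (· ∈ Q) y ∧
    ∃ h : y ≤ x, IsModular (⟨y, h⟩ : {u : β // u ≤ x}))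

/-- `Q` is a TM-ideal of the locally geometric poset `β`: an M-ideal where
moreover `|a ∨ y| = 1` for `y ∈ Q` and atoms `a ∉ Q`. -/
def IsTMIdeal (β : Type*) [PartialOrder β] (Q : Set β) : Prop :=
  IsMIdeal β Q ∧ ∀ y ∈ Q, ∀ a ∈ atoms β, a ∉ Q → ∃! z, z ∈ joinSet {a, y}

/-- A locally geometric poset is supersolvable if it admits an M-chain
`{0̂} = Q_0 ⊊ Q_1 ⊊ ⋯ ⊊ Q_r = P` with each `Q_i` an M-ideal of `Q_{i+1}`
and `rk(Q_i) = i`. -/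
def IsSupersolvable (β : Type*) [PartialOrder β] [Fintype β] [OrderBot β] : Prop :=
  ∃ Q : Fin (prk β + 1) → Set β,
    Q 0 = {⊥} ∧ Q (Fin.last _) = Set.univ ∧
    (∀ i : Fin (prk β), Q i.castSucc ⊂ Q i.succ) ∧
    (∀ i : Fin (prk β + 1), prk {y : β // y ∈ Q i} = i) ∧
    ∀ i : Fin (prk β),
      IsMIdeal {y : β // y ∈ Q i.succ} {z : {y : β // y ∈ Q i.succ} | (z : β) ∈ Q i.castSucc}

/-- A locally geometric poset is strictly supersolvable if it admits a
TM-chain as above, with each `Q_i` a TM-ideal of `Q_{i+1}`. -/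
def IsStrictlySupersolvable (β : Type*) [PartialOrder β] [Fintype β] [OrderBot β] : Prop :=
  ∃ Q : Fin (prk β + 1) → Set β,
    Q 0 = {⊥} ∧ Q (Fin.last _) = Set.univ ∧
    (∀ i : Fin (prk β), Q i.castSucc ⊂ Q i.succ) ∧
    (∀ i : Fin (prk β + 1), prk {y : β // y ∈ Q i} = i) ∧
    ∀ i : Fin (prk β),
      IsTMIdeal {y : β // y ∈ Q i.succ} {z : {y : β // y ∈ Q i.succ} | (z : β) ∈ Q i.castSucc}

end PosetArr

end

/-!
Let `x` have maximal rank and let `z` be a join of the atoms of `P'` below `x`. In the geometric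
lattice `P_{≤x}` the top is the join of the atoms, so `x = z` or `x = z ∨ a`; joining an atom
raises the rank by at most one, hence `rk x ≤ rk z + 1`. Building `z` by joining its atoms one at
a time gives a chain of elements of `P'` in which every strict step raises the rank in `P'` by at
least one and the rank in `P` by at most one, so `z` has rank at least `rk z` in `P'`.
-/

namespace PosetArr

section Rank

variable {α : Type*} [PartialOrder α]

lemma rk_bot [OrderBot α] : rk (⊥ : α) = 0 := by
  simp [rk]

lemma rk_lt_rk [Finite α] {x y : α} (h : x < y) : rk x < rk y := by
  obtain ⟨t, hts, hte, htc⟩ :=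
    Set.exists_eq_chainHeight_of_finite (Set.Iio x) (· < ·) (Set.toFinite _)
  have hchain : IsChain (· < ·) (insert x t) := htc.insert fun b hb _ => Or.inr (hts hb)
  have hsub : insert x t ⊆ Set.Iio y := Set.insert_subset h fun b hb => (hts hb).trans h
  have hle := Set.encard_le_chainHeight_of_isChain _ _ hsub hchain
  rw [Set.encard_insert_of_notMem fun hx => (hts hx).false, hte] at hle
  have hfin := Set.chainHeight_ne_top_of_finite (Set.Iio x) (· < ·) (Set.toFinite _)
  rw [rk, rk, Nat.lt_iff_add_one_le, ← ENat.toNat_one, ← ENat.toNat_add hfin ENat.one_ne_top]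
  exact ENat.toNat_le_toNat hle (Set.chainHeight_ne_top_of_finite _ _ (Set.toFinite _))

lemma rk_coe_le [Finite α] {p : α → Prop} (u : {y // p y}) : rk u ≤ rk (u : α) := by
  have hmap :
      (Subtype.val '' Set.Iio u).chainHeight (· < ·) = (Set.Iio u).chainHeight (· < ·) :=
    Set.chainHeight_eq_of_relEmbedding _ (OrderEmbedding.subtype p).ltEmbedding
  have hsub : Subtype.val '' Set.Iio u ⊆ Set.Iio (u : α) := Set.image_subset_iff.2 fun _ h => h
  exact ENat.toNat_le_toNat (hmap ▸ Set.chainHeight_mono _ _ _ hsub)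
    (Set.chainHeight_ne_top_of_finite _ _ (Set.toFinite _))

lemma rk_coe_of_isLowerSet {p : α → Prop} (hp : IsLowerSet {y | p y}) (u : {y // p y}) :
    rk (u : α) = rk u := by
  have himage : Subtype.val '' Set.Iio u = Set.Iio (u : α) :=
    Set.ext fun y => ⟨fun ⟨_, hw, hwy⟩ => hwy ▸ hw, fun hy => ⟨⟨y, hp hy.le u.2⟩, hy, rfl⟩⟩
  rw [rk, rk, ← himage]
  exact congrArg ENat.toNat
    (Set.chainHeight_eq_of_relEmbedding _ (OrderEmbedding.subtype p).ltEmbedding)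

lemma prk_subtype_le [Fintype α] (p : α → Prop) [Fintype {y // p y}] :
    prk {y // p y} ≤ prk α :=
  Finset.sup_le fun u _ => (rk_coe_le u).trans (Finset.le_sup (Finset.mem_univ _))

end Rank

section Subtype

variable {α : Type*} [PartialOrder α] {p : α → Prop}

lemma _root_.CovBy.coe_of_isLowerSet (hp : IsLowerSet {y | p y}) {u v : {y // p y}}
    (h : u ⋖ v) : (u : α) ⋖ v :=
  ⟨h.1, fun c huc hcv => h.2 (show u < ⟨c, hp hcv.le v.2⟩ from huc) hcv⟩

lemma mem_joinSet_of_coe {T : Set {y // p y}} {z : {y // p y}}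
    (hz : (z : α) ∈ joinSet (Subtype.val '' T)) : z ∈ joinSet T :=
  ⟨fun _ hu => hz.1 ⟨_, hu, rfl⟩,
    fun w hw hwz => Subtype.ext (hz.2 w (Set.forall_mem_image.2 hw) hwz)⟩

end Subtype

section JoinSet

variable {α : Type*} [PartialOrder α]

lemma exists_mem_joinSet_le [Finite α] {T : Set α} {x : α} (hx : x ∈ upperBounds T) :
    ∃ z ∈ joinSet T, z ≤ x := by
  obtain ⟨z, hzx, hz⟩ := exists_minimal_le_of_wellFoundedLT (· ∈ upperBounds T) x hx
  exact ⟨z, ⟨hz.1, fun w hw hwz => le_antisymm hwz (hz.2 hw hwz)⟩, hzx⟩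

lemma mem_joinSet_pair_of_mem_joinSet_insert {T : Set α} {b y z : α}
    (hz : z ∈ joinSet (insert b T)) (hy : y ∈ upperBounds T) (hyz : y ≤ z) :
    z ∈ joinSet {y, b} := by
  refine ⟨?_, fun w hw hwz => hz.2 w ?_ hwz⟩
  · rintro c (rfl | rfl)
    exacts [hyz, hz.1 (Set.mem_insert _ _)]
  · rintro c (rfl | hc)
    exacts [hw (Set.mem_insert_of_mem _ rfl), (hy hc).trans (hw (Set.mem_insert _ _))]

lemma eq_bot_of_mem_joinSet_empty [OrderBot α] {z : α} (hz : z ∈ joinSet ∅) : z = ⊥ :=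
  (hz.2 ⊥ (by simp) bot_le).symm

end JoinSet

section LocallyGeometric

variable {α : Type*} [PartialOrder α]

lemma rk_le_rk_add_one_of_mem_joinSet_pair (hLG : IsLocallyGeometric α) {b y z : α}
    (hb : b ∈ atoms α) (hz : z ∈ joinSet {y, b}) : rk z ≤ rk y + 1 := by
  by_cases hby : b ≤ y
  · have hyz : y = z :=
      hz.2 y (by rintro c (rfl | rfl); exacts [le_rfl, hby]) (hz.1 (Set.mem_insert _ _))
    exact hyz ▸ Nat.le_succ _
  have hIic : IsLowerSet {u | u ≤ z} := isLowerSet_Iic z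
  let y' : {u // u ≤ z} := ⟨y, hz.1 (Set.mem_insert _ _)⟩
  let b' : {u // u ≤ z} := ⟨b, hz.1 (Set.mem_insert_of_mem _ rfl)⟩
  have hb' : b' ∈ atoms {u // u ≤ z} := (rk_coe_of_isLowerSet hIic b').symm.trans hb
  have hjoin : (⟨z, le_rfl⟩ : {u // u ≤ z}) ∈ joinSet {y', b'} :=
    mem_joinSet_of_coe (by rwa [Set.image_pair])
  have hcov : y' ⋖ ⟨z, le_rfl⟩ := ((hLG.2 z).2 _ _).2 ⟨b', hb', hby, hjoin⟩
  exact (hLG.1 _ _ (hcov.coe_of_isLowerSet hIic)).le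

lemma eq_of_forall_atom_le [Finite α] (hLG : IsLocallyGeometric α) {x z : α} (hzx : z ≤ x)
    (h : ∀ b ∈ atoms α, b ≤ x → b ≤ z) : z = x := by
  by_contra hne
  have hIic : IsLowerSet {u | u ≤ x} := isLowerSet_Iic x
  obtain ⟨c, hcov, -⟩ := exists_covBy_le_of_lt
    (show (⟨z, hzx⟩ : {u // u ≤ x}) < ⟨x, le_rfl⟩ from Subtype.mk_lt_mk.2 (hzx.lt_of_ne hne))
  obtain ⟨b, hb, hbz, -⟩ := ((hLG.2 x).2 _ _).1 hcov
  exact hbz (h b ((rk_coe_of_isLowerSet hIic b).trans hb) b.2)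

lemma rk_le_rk_genSub [Finite α] [OrderBot α] (hLG : IsLocallyGeometric α) {B : Set α}
    (hB : B ⊆ atoms α) (t : Finset α) (ht : ↑t ⊆ B) {z : α} (hz : z ∈ joinSet t) :
    rk z ≤ rk (⟨z, Set.mem_insert_of_mem _ ⟨t, ht, hz⟩⟩ : {y // y ∈ genSub B}) := by
  induction t using Finset.induction_on generalizing z with
  | empty =>
    obtain rfl : z = ⊥ := eq_bot_of_mem_joinSet_empty (by simpa using hz)
    exact rk_bot.trans_le (Nat.zero_le _)
  | insert b t _ ih =>
    have hzQ : z ∈ genSub B := Set.mem_insert_of_mem _ ⟨_, ht, hz⟩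
    have htB : ↑t ⊆ B := (Finset.coe_subset.2 (Finset.subset_insert b t)).trans ht
    rw [Finset.coe_insert] at ht hz
    obtain ⟨z', hz', hz'z⟩ :=
      exists_mem_joinSet_le fun c hc => hz.1 (Set.mem_insert_of_mem b hc)
    have hstep : rk z ≤ rk z' + 1 := rk_le_rk_add_one_of_mem_joinSet_pair hLG
      (hB (ht (Set.mem_insert b t))) (mem_joinSet_pair_of_mem_joinSet_insert hz hz'.1 hz'z)
    have hind := ih htB hz'
    rcases hz'z.eq_or_lt with rfl | hlt
    · exact hind
    · have hz'Q : z' ∈ genSub B := Set.mem_insert_of_mem _ ⟨t, htB, hz'⟩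
      have := rk_lt_rk (show (⟨z', hz'Q⟩ : {y // y ∈ genSub B}) < ⟨z, hzQ⟩ from hlt)
      omega

end LocallyGeometric

/-- Let `P` be a locally geometric poset and `a` an atom of `P`.
Then `rk(P) − rk(P')` is either `0` or `1`, where `P' = P(A(P) \ {a})`. -/
theorem rank_delete_eq_or_succ (α : Type) [PartialOrder α] [Fintype α] [OrderBot α]
    (hLG : IsLocallyGeometric α) (a : α) (ha : a ∈ atoms α) :
    prk α = prk {y : α // y ∈ genSub (atoms α \ {a})} ∨
      prk α = prk {y : α // y ∈ genSub (atoms α \ {a})} + 1 := by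
  set B := atoms α \ {a}
  obtain ⟨x, -, hx⟩ := Finset.exists_mem_eq_sup Finset.univ Finset.univ_nonempty (rk (α := α))
  let t : Finset α := {b | b ∈ B ∧ b ≤ x}
  have ht (b : α) : b ∈ (t : Set α) ↔ b ∈ B ∧ b ≤ x := by simp [t]
  obtain ⟨z, hz, hzx⟩ := exists_mem_joinSet_le fun b hb => ((ht b).1 hb).2
  have htB : ↑t ⊆ B := fun b hb => ((ht b).1 hb).1
  have hbz : ∀ b ∈ B, b ≤ x → b ≤ z := fun b hb hbx => hz.1 ((ht b).2 ⟨hb, hbx⟩)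
  have hxz : rk x ≤ rk z + 1 := by
    by_cases hax : a ≤ x
    · obtain ⟨w, hw, hwle⟩ := exists_mem_joinSet_le (T := {z, a}) (by
        rintro c (rfl | rfl) <;> assumption)
      have hwx : w = x := eq_of_forall_atom_le hLG hwle fun b hb hbx => by
        by_cases hba : b = a
        · exact hba ▸ hw.1 (Set.mem_insert_of_mem _ rfl)
        · exact (hbz b ⟨hb, hba⟩ hbx).trans (hw.1 (Set.mem_insert _ _))
      exact hwx ▸ rk_le_rk_add_one_of_mem_joinSet_pair hLG ha hw
    · have hzx : z = x := eq_of_forall_atom_le hLG hzx fun b hb hbx =>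
        hbz b ⟨hb, fun hba => hax (hba ▸ hbx)⟩ hbx
      subst hzx
      omega
  have hzP' := rk_le_rk_genSub hLG Set.sdiff_subset t htB hz
  have hzprk := Finset.le_sup (f := rk) (Finset.mem_univ
    (⟨z, Set.mem_insert_of_mem _ ⟨t, htB, hz⟩⟩ : {y // y ∈ genSub B}))
  have hprk := prk_subtype_le (· ∈ genSub B)
  simp only [prk] at hx hprk ⊢
  omega

end PosetArr
end

section
/- If a locally geometric poset P has an M-ideal Q with rk(Q) = rk(P) − 1, then P is pure, i.e., all maximal elements of P have rank rk(P). -/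
open scoped Classical
open Polynomial

/-! Below a maximal element `x` sits a maximal element `y` of `Q`, of rank `rk(P) - 1`. In a
locally geometric poset every element is the join of the atoms below it, so the join-closed
ideal `Q`, being of smaller rank than `P`, misses some atom `a`. As `a ∨ x` is nonempty and
`x` is maximal, `a ≤ x`; hence `x ∉ Q`, so `y < x` and `rk x ≥ rk y + 1 = rk(P)`. -/

namespace PosetArr

section Rank

variable {α : Type*} [PartialOrder α]

lemma rk_subtype_mk {p : α → Prop} (hp : IsLowerSet {x | p x}) (x : α) (hx : p x) :
    rk (⟨x, hx⟩ : Subtype p) = rk x := by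
  have himg : Subtype.val '' Set.Iio (⟨x, hx⟩ : Subtype p) = Set.Iio x := by
    ext u
    constructor
    · rintro ⟨v, hv, rfl⟩
      exact hv
    · exact fun hu => ⟨⟨u, hp hu.le hx⟩, hu, rfl⟩
  rw [rk, rk, ← himg]
  exact congrArg ENat.toNat
    (Set.chainHeight_eq_of_relEmbedding _ (Subtype.relEmbedding (· < ·) p)).symm

lemma chainHeight_Iio_add_one_le [Finite α] {x y : α} (h : x < y) :
    (Set.Iio x).chainHeight (· < ·) + 1 ≤ (Set.Iio y).chainHeight (· < ·) := by
  obtain ⟨t, hts, hte, htc⟩ :=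
    Set.exists_eq_chainHeight_of_finite (Set.Iio x) (· < ·) (Set.toFinite _)
  have hxt : x ∉ t := fun hx => lt_irrefl x (hts hx)
  rw [← hte, ← Set.encard_insert_of_notMem hxt]
  refine Set.encard_le_chainHeight_of_isChain _ _ ?_ (htc.insert fun b hb _ => Or.inr (hts hb))
  exact Set.insert_subset h fun u hu => (hts hu).trans h

lemma rk_strictMono [Finite α] : StrictMono (rk : α → ℕ) := by
  intro x y h
  have hfin : ∀ z : α, (Set.Iio z).chainHeight (· < ·) ≠ ⊤ := fun z =>
    Set.chainHeight_ne_top_of_finite _ _ (Set.toFinite _)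
  calc rk x < rk x + 1 := Nat.lt_succ_self _
    _ = ((Set.Iio x).chainHeight (· < ·) + 1).toNat :=
      (ENat.toNat_add (hfin x) ENat.one_ne_top).symm
    _ ≤ rk y := ENat.toNat_le_toNat (chainHeight_Iio_add_one_le h) (hfin y)

variable [Fintype α]

lemma rk_le_prk (x : α) : rk x ≤ prk α :=
  Finset.le_sup (Finset.mem_univ x)

lemma exists_rk_eq_prk [Nonempty α] : ∃ x : α, rk x = prk α := by
  obtain ⟨x, -, hx⟩ := Finset.exists_mem_eq_sup Finset.univ Finset.univ_nonempty (rk (α := α))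
  exact ⟨x, hx.symm⟩

lemma rk_le_prk_of_mem {Q : Set α} (hQ : IsLowerSet Q) {x : α} (hx : x ∈ Q) :
    rk x ≤ prk {y // y ∈ Q} := by
  rw [← rk_subtype_mk hQ x hx]
  exact rk_le_prk (⟨x, hx⟩ : {y // y ∈ Q})

lemma exists_maximal_rk_eq_prk {Q : Set α} (hQ : IsLowerSet Q) (hne : Q.Nonempty) :
    ∃ y, Maximal (· ∈ Q) y ∧ rk y = prk {y // y ∈ Q} := by
  have : Nonempty Q := hne.to_subtype
  obtain ⟨⟨x, hxQ⟩, hx⟩ := exists_rk_eq_prk (α := Q)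
  rw [rk_subtype_mk hQ] at hx
  obtain ⟨y, hxy, hy⟩ := Finite.exists_le_maximal hxQ
  exact ⟨y, hy, (rk_le_prk_of_mem hQ hy.1).antisymm (hx ▸ rk_strictMono.monotone hxy)⟩

end Rank

namespace IsLocallyGeometric

variable {α : Type*} [PartialOrder α] [Finite α] (hLG : IsLocallyGeometric α)
include hLG

lemma exists_atom_le_not_le {w z : α} (h : w < z) :
    ∃ a ∈ atoms α, a ≤ z ∧ ¬a ≤ w := by
  obtain ⟨v, hwv, -⟩ :=
    exists_covBy_le_of_lt (show (⟨w, h.le⟩ : {u // u ≤ z}) < ⟨z, le_rfl⟩ from h)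
  obtain ⟨a, ha, haw, -⟩ := ((hLG.2 z).2 _ v).mp hwv
  exact ⟨a, (rk_subtype_mk (isLowerSet_Iic z) _ a.2).symm.trans ha, a.2, haw⟩

lemma mem_joinSet_atoms_inter_Iic (z : α) : z ∈ joinSet (atoms α ∩ Set.Iic z) := by
  refine ⟨fun a ha => ha.2, fun w hw hwz => ?_⟩
  by_contra hne
  obtain ⟨a, ha, haz, haw⟩ := hLG.exists_atom_le_not_le (lt_of_le_of_ne hwz hne)
  exact haw (hw ⟨ha, haz⟩)

lemma eq_univ_of_atoms_subset {Q : Set α} (hjoin : ∀ T ⊆ Q, joinSet T ⊆ Q)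
    (hatoms : atoms α ⊆ Q) : Q = Set.univ :=
  Set.eq_univ_of_forall fun z =>
    hjoin _ (fun _ ha => hatoms ha.1) (hLG.mem_joinSet_atoms_inter_Iic z)

end IsLocallyGeometric

namespace IsMIdeal

variable {α : Type*} [PartialOrder α] {Q : Set α} (hQ : IsMIdeal α Q)
include hQ

lemma rk_eq_prk_of_maximal [Fintype α] {y : α} (hy : Maximal (· ∈ Q) y) :
    rk y = prk {y // y ∈ Q} := by
  obtain ⟨z, hz, hzrk⟩ := exists_maximal_rk_eq_prk hQ.1 ⟨y, hy.1⟩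
  exact hzrk ▸ hQ.2.1 y z hy hz

lemma exists_atom_notMem [Fintype α] (hLG : IsLocallyGeometric α)
    (hrk : prk {y // y ∈ Q} < prk α) :
    ∃ a ∈ atoms α, a ∉ Q := by
  by_contra! hatoms
  have : Nonempty α := not_isEmpty_iff.mp fun _ => by simp [prk] at hrk
  obtain ⟨z, hz⟩ := exists_rk_eq_prk (α := α)
  have hzQ : z ∈ Q := hLG.eq_univ_of_atoms_subset hQ.2.2.1 hatoms ▸ Set.mem_univ z
  exact (rk_le_prk_of_mem hQ.1 hzQ).not_gt (hz ▸ hrk)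

lemma notMem_of_isMax {a x : α} (ha : a ∈ atoms α) (haQ : a ∉ Q) (hx : IsMax x) :
    x ∉ Q := by
  intro hxQ
  obtain ⟨j, hj, -⟩ := hQ.2.2.2.1 x hxQ a ha haQ
  have hxj : x = j := hx.eq_of_le (hj (Set.mem_insert_of_mem _ rfl))
  exact haQ (hQ.1 (hxj ▸ hj (Set.mem_insert a _)) hxQ)

end IsMIdeal

/-- If a locally geometric poset `P` has an M-ideal `Q` with
`rk(Q) = rk(P) − 1`, then `P` is pure: all maximal elements have rank `rk(P)`. -/
theorem mIdeal_pure (α : Type) [PartialOrder α] [Fintype α]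
    (hLG : IsLocallyGeometric α) (Q : Set α) (hQ : IsMIdeal α Q)
    (hrk : prk {y : α // y ∈ Q} + 1 = prk α) :
    ∀ x : α, IsMax x → rk x = prk α := by
  intro x hx
  obtain ⟨y, hy, hyx, -⟩ := hQ.2.2.2.2 x hx
  obtain ⟨a, ha, haQ⟩ := hQ.exists_atom_notMem hLG (by omega)
  have hxQ : x ∉ Q := hQ.notMem_of_isMax ha haQ hx
  have hyx : y < x := lt_of_le_of_ne hyx (ne_of_mem_of_not_mem hy.1 hxQ)
  have hlt : rk y < rk x := rk_strictMono hyx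
  have hy_rk : rk y = prk {y // y ∈ Q} := hQ.rk_eq_prk_of_maximal hy
  have hx_le : rk x ≤ prk α := rk_le_prk x
  omega

end PosetArr
end
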